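/- arXiv:1010.5167 — 7 statements merged into one kernel-verified Lean document; each statement's English description precedes it below -/
import Mathlib

section
/- If all zeros z_1,...,z_n of a monic polynomial F of degree n lie in the closed unit disk, then the critical points w_1,...,w_{n−1} of F satisfy ∏_{j=1}^{n−1} |F(w_j)| ≤ 1. In particular, there exists a zero z_k of F with ∏_{j=1}^{n−1}|z_k − w_j| ≤ 1. -/
/-!
At a zero `z k` of `F = ∏ (X - z m)` the derivative is `∏_{m ≠ k} (z k - z m)`, and it is also
`n ∏_j (z k - w j)`. Multiplying over `k` gives `n ^ n ∏_{k,j} ‖z k - w j‖ = |Discr F| = ‖det V‖ ^ 2`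
for the Vandermonde matrix `V` of the zeros. The Gram matrix `V Vᴴ` is positive semidefinite with
trace `∑_{k,m} ‖z k‖ ^ (2m) ≤ n ^ 2`, so AM-GM on its eigenvalues gives `‖det V‖ ^ 2 ≤ n ^ n`.
Hence `∏_j ‖F (w j)‖ = ∏_{k,j} ‖z k - w j‖ ≤ 1`, and one of the `n` factors `∏_j ‖z k - w j‖`
is at most `1`.
-/

open Finset Matrix
open scoped ComplexOrder

theorem Real.prod_le_pow_card_of_sum_le {ι : Type*} (s : Finset ι) {x : ι → ℝ}
    (hx : ∀ i ∈ s, 0 ≤ x i) {c : ℝ} (hsum : ∑ i ∈ s, x i ≤ #s * c) :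
    ∏ i ∈ s, x i ≤ c ^ #s := by
  rcases s.eq_empty_or_nonempty with rfl | hs
  · simp
  have hcard : (0 : ℝ) < #s := by exact_mod_cast hs.card_pos
  have hamgm := Real.geom_mean_le_arith_mean s (fun _ ↦ 1) x (fun _ _ ↦ zero_le_one)
    (by simpa using hcard) hx
  simp only [Real.rpow_one, sum_const, nsmul_eq_mul, mul_one, one_mul] at hamgm
  have hmean : (∏ i ∈ s, x i) ^ (#s : ℝ)⁻¹ ≤ c :=
    hamgm.trans ((div_le_iff₀' hcard).mpr hsum)
  calc ∏ i ∈ s, x i = ((∏ i ∈ s, x i) ^ (#s : ℝ)⁻¹) ^ #s := by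
        rw [← Real.rpow_natCast, ← Real.rpow_mul (prod_nonneg hx), inv_mul_cancel₀ hcard.ne',
          Real.rpow_one]
    _ ≤ c ^ #s := by gcongr; exact Real.rpow_nonneg (prod_nonneg hx) _

theorem Matrix.PosSemidef.re_det_le_pow_of_re_trace_le {𝕜 n : Type*} [RCLike 𝕜] [Fintype n]
    [DecidableEq n] {A : Matrix n n 𝕜} (hA : A.PosSemidef) {c : ℝ}
    (htrace : RCLike.re A.trace ≤ Fintype.card n * c) :
    RCLike.re A.det ≤ c ^ Fintype.card n := by
  rw [hA.isHermitian.det_eq_prod_eigenvalues, ← RCLike.ofReal_prod, RCLike.ofReal_re]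
  rw [hA.isHermitian.trace_eq_sum_eigenvalues, ← RCLike.ofReal_sum, RCLike.ofReal_re] at htrace
  exact Real.prod_le_pow_card_of_sum_le univ (fun i _ ↦ hA.eigenvalues_nonneg i) htrace

theorem Matrix.re_trace_mul_conjTranspose_self {𝕜 m n : Type*} [RCLike 𝕜] [Fintype m] [Fintype n]
    (A : Matrix m n 𝕜) : RCLike.re (A * Aᴴ).trace = ∑ i, ∑ j, ‖A i j‖ ^ 2 := by
  simp [Matrix.trace, Matrix.mul_apply, RCLike.mul_conj]

theorem Matrix.norm_det_vandermonde_sq_le {𝕜 : Type*} [RCLike 𝕜] {n : ℕ} (z : Fin n → 𝕜)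
    (hz : ∀ k, ‖z k‖ ≤ 1) : ‖(vandermonde z).det‖ ^ 2 ≤ (n : ℝ) ^ n := by
  set V := vandermonde z
  have hdet : RCLike.re (V * Vᴴ).det = ‖V.det‖ ^ 2 := by
    rw [det_mul, det_conjTranspose, RCLike.star_def, RCLike.mul_conj, ← RCLike.ofReal_pow,
      RCLike.ofReal_re]
  have hentry : ∀ k m, ‖V k m‖ ^ 2 ≤ 1 := fun k m ↦ by
    rw [show V k m = z k ^ (m : ℕ) from vandermonde_apply z k m, norm_pow, ← pow_mul]
    exact pow_le_one₀ (norm_nonneg _) (hz k)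
  have htrace : RCLike.re (V * Vᴴ).trace ≤ Fintype.card (Fin n) * n := by
    rw [re_trace_mul_conjTranspose_self]
    calc ∑ k, ∑ m, ‖V k m‖ ^ 2 ≤ ∑ _k : Fin n, ∑ _m : Fin n, (1 : ℝ) :=
          sum_le_sum fun k _ ↦ sum_le_sum fun m _ ↦ hentry k m
      _ = _ := by simp
  simpa [← hdet] using (posSemidef_self_mul_conjTranspose V).re_det_le_pow_of_re_trace_le htrace

theorem Matrix.prod_prod_erase_norm_sub_eq_norm_det_vandermonde_sq {𝕜 : Type*} [NormedField 𝕜]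
    {n : ℕ} (z : Fin n → 𝕜) :
    ∏ k, ∏ m ∈ univ.erase k, ‖z k - z m‖ = ‖(vandermonde z).det‖ ^ 2 := by
  have hsplit := prod_prod_Ioi_mul_eq_prod_prod_off_diag fun a b : Fin n ↦ ‖z b - z a‖
  simp only [compl_singleton] at hsplit
  rw [det_vandermonde, norm_prod, ← prod_pow, ← hsplit]
  refine prod_congr rfl fun i _ ↦ ?_
  rw [norm_prod, ← prod_pow]
  exact prod_congr rfl fun j _ ↦ by rw [norm_sub_rev, sq]

theorem deriv_prod_sub_apply {𝕜 ι : Type*} [NontriviallyNormedField 𝕜] [Fintype ι] [DecidableEq ι]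
    (z : ι → 𝕜) (k : ι) :
    deriv (fun x ↦ ∏ i, (x - z i)) (z k) = ∏ i ∈ univ.erase k, (z k - z i) := by
  have hderiv := HasDerivAt.fun_finsetProd (u := univ) (x := z k)
    fun i _ ↦ (hasDerivAt_id' (z k)).sub_const (z i)
  rw [hderiv.deriv, sum_eq_single k]
  · simp
  · intro i _ hik
    rw [prod_eq_zero (mem_erase.mpr ⟨Ne.symm hik, mem_univ k⟩) (sub_self _), zero_smul]
  · simp

theorem Finset.exists_le_one_of_prod_le_one {ι R : Type*} [CommSemiring R] [LinearOrder R]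
    [IsStrictOrderedRing R] {s : Finset ι} (hs : s.Nonempty) {f : ι → R}
    (hprod : ∏ i ∈ s, f i ≤ 1) : ∃ i ∈ s, f i ≤ 1 := by
  by_contra! hbig
  have := prod_lt_prod_of_nonempty (fun _ _ ↦ one_pos) hbig hs
  rw [prod_const_one] at this
  exact this.not_ge hprod

/-- If all zeros of a monic polynomial `F` of degree `n` lie in the closed
unit disk, then its critical points `w j` satisfy `∏ j, |F(w j)| ≤ 1`; in
particular some zero `z k` satisfies `∏ j, |z k - w j| ≤ 1`. -/
theorem stmt_7 (n : ℕ) (hn : 2 ≤ n) (z : Fin n → ℂ) (hz : ∀ k, ‖z k‖ ≤ 1)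
    (w : Fin (n - 1) → ℂ)
    (f : ℂ → ℂ) (hf : ∀ x, f x = ∏ k, (x - z k))
    (hf' : ∀ x, deriv f x = (n : ℂ) * ∏ j, (x - w j)) :
    (∏ j, ‖f (w j)‖) ≤ 1 ∧ ∃ k, (∏ j, ‖z k - w j‖) ≤ 1 := by
  have hn0 : 0 < n := by omega
  have hderiv_root : ∀ k, (n : ℝ) * ∏ j, ‖z k - w j‖ = ∏ m ∈ univ.erase k, ‖z k - z m‖ := by
    intro k
    have h := hf' (z k)
    rw [funext hf, deriv_prod_sub_apply] at h
    simpa [norm_prod] using congrArg norm h.symm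
  have hprod : ∏ k, ∏ j, ‖z k - w j‖ ≤ 1 := by
    have hdisc : (n : ℝ) ^ n * ∏ k, ∏ j, ‖z k - w j‖ ≤ (n : ℝ) ^ n := by
      calc (n : ℝ) ^ n * ∏ k, ∏ j, ‖z k - w j‖ = ∏ k, ((n : ℝ) * ∏ j, ‖z k - w j‖) := by
            simp [prod_mul_distrib]
        _ = ‖(vandermonde z).det‖ ^ 2 := by
            simp_rw [hderiv_root, prod_prod_erase_norm_sub_eq_norm_det_vandermonde_sq]
        _ ≤ (n : ℝ) ^ n := norm_det_vandermonde_sq_le z hz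
    exact (mul_le_iff_le_one_right (pow_pos (Nat.cast_pos.mpr hn0) n)).mp hdisc
  refine ⟨?_, ?_⟩
  · calc ∏ j, ‖f (w j)‖ = ∏ k, ∏ j, ‖z k - w j‖ := by
          simp_rw [hf, norm_prod, norm_sub_rev (w _)]
          exact prod_comm
      _ ≤ 1 := hprod
  · obtain ⟨k, -, hk⟩ := exists_le_one_of_prod_le_one (univ_nonempty_iff.mpr ⟨⟨0, hn0⟩⟩) hprod
    exact ⟨k, hk⟩
end

section
/- Let F(z) = (z−z_1)^{m_1}(z−z_2)^{m_2}(z−z_3)^{m_3} with three distinct zeros and n = m_1+m_2+m_3, and let w_1, w_2 be the zeros of F' that are not zeros of F. Then the three vectors v_1 = (√m_j/(w_1−z_j))_j, v_2 = (conj(√m_j/(w_2−z_j)))_j, and v_3 = (√m_1,√m_2,√m_3) are mutually orthogonal in ℂ³. -/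
/-!
At a zero `w` of `F'` that is not a zero of `F`, the logarithmic derivative
`F'/F = ∑ m_j / (w - z_j)` vanishes; up to conjugation this is `⟨v₁, v₃⟩` resp. `⟨v₂, v₃⟩`.
Subtracting the identities at `w₁` and `w₂` and dividing by `w₂ - w₁` gives
`∑ m_j / ((w₁ - z_j)(w₂ - z_j)) = 0`, which is `⟨v₁, v₂⟩` up to conjugation.
-/

open Finset

section LogDeriv

variable {𝕜 ι : Type*} [NontriviallyNormedField 𝕜] {s : Finset ι} {z : ι → 𝕜} {m : ι → ℕ} {x : 𝕜}

theorem logDeriv_prod_sub_pow (hx : ∏ i ∈ s, (x - z i) ^ m i ≠ 0) :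
    logDeriv (fun y ↦ ∏ i ∈ s, (y - z i) ^ m i) x = ∑ i ∈ s, (m i : 𝕜) / (x - z i) := by
  rw [logDeriv_prod (fun i hi ↦ prod_ne_zero_iff.mp hx i hi) (fun i _ ↦ by fun_prop)]
  refine sum_congr rfl fun i _ ↦ ?_
  rw [logDeriv_fun_pow (by fun_prop), logDeriv_apply, deriv_sub_const, deriv_id'', mul_one_div]

theorem sum_div_sub_eq_zero_of_deriv_eq_zero {f : 𝕜 → 𝕜}
    (hf : ∀ y, f y = ∏ i ∈ s, (y - z i) ^ m i) (hfx : f x ≠ 0) (hdx : deriv f x = 0) :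
    ∑ i ∈ s, (m i : 𝕜) / (x - z i) = 0 := by
  obtain rfl : f = fun y ↦ ∏ i ∈ s, (y - z i) ^ m i := funext hf
  rw [← logDeriv_prod_sub_pow hfx, logDeriv_apply, hdx, zero_div]

theorem sub_ne_zero_of_prod_pow_ne_zero (hx : ∏ i ∈ s, (x - z i) ^ m i ≠ 0) {i : ι} (hi : i ∈ s)
    (hm : m i ≠ 0) : x - z i ≠ 0 :=
  ne_zero_pow hm (prod_ne_zero_iff.mp hx i hi)

end LogDeriv

theorem sum_div_sub_mul_sub_eq_zero {K ι : Type*} [Field K] {s : Finset ι} {c a : ι → K}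
    {w₁ w₂ : K} (hw : w₁ ≠ w₂) (h₁ : ∀ i ∈ s, w₁ - a i ≠ 0) (h₂ : ∀ i ∈ s, w₂ - a i ≠ 0)
    (hs₁ : ∑ i ∈ s, c i / (w₁ - a i) = 0) (hs₂ : ∑ i ∈ s, c i / (w₂ - a i) = 0) :
    ∑ i ∈ s, c i / ((w₁ - a i) * (w₂ - a i)) = 0 := by
  have partial_fractions : (w₂ - w₁) * ∑ i ∈ s, c i / ((w₁ - a i) * (w₂ - a i)) =
      ∑ i ∈ s, c i / (w₁ - a i) - ∑ i ∈ s, c i / (w₂ - a i) := by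
    rw [mul_sum, ← sum_sub_distrib]
    refine sum_congr rfl fun i hi ↦ ?_
    have := h₁ i hi
    have := h₂ i hi
    field_simp
    ring
  rw [hs₁, hs₂, sub_self] at partial_fractions
  exact (mul_eq_zero.mp partial_fractions).resolve_left (sub_ne_zero.mpr hw.symm)

theorem Complex.ofReal_sqrt_mul_self_natCast (n : ℕ) : (√n : ℂ) * √n = n := by
  rw [← ofReal_mul, Real.mul_self_sqrt n.cast_nonneg, ofReal_natCast]

theorem stmt_11_general (z : Fin 3 → ℂ)
    (m : Fin 3 → ℕ) (hm : ∀ j, 0 < m j)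
    (f : ℂ → ℂ) (hf : ∀ x, f x = ∏ j, (x - z j) ^ (m j))
    (w₁ w₂ : ℂ) (hw : w₁ ≠ w₂)
    (hw₁ : deriv f w₁ = 0) (hw₁' : f w₁ ≠ 0)
    (hw₂ : deriv f w₂ = 0) (hw₂' : f w₂ ≠ 0) :
    let v₁ : Fin 3 → ℂ := fun j => (Real.sqrt (m j) : ℂ) / (w₁ - z j)
    let v₂ : Fin 3 → ℂ := fun j =>
      starRingEnd ℂ ((Real.sqrt (m j) : ℂ) / (w₂ - z j))
    let v₃ : Fin 3 → ℂ := fun j => (Real.sqrt (m j) : ℂ)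
    (∑ j, starRingEnd ℂ (v₁ j) * v₂ j = 0) ∧
    (∑ j, starRingEnd ℂ (v₁ j) * v₃ j = 0) ∧
    (∑ j, starRingEnd ℂ (v₂ j) * v₃ j = 0) := by
  intro v₁ v₂ v₃
  have S₁ := sum_div_sub_eq_zero_of_deriv_eq_zero hf hw₁' hw₁
  have S₂ := sum_div_sub_eq_zero_of_deriv_eq_zero hf hw₂' hw₂
  have T := sum_div_sub_mul_sub_eq_zero hw
    (fun j hj ↦ sub_ne_zero_of_prod_pow_ne_zero (hf w₁ ▸ hw₁') hj (hm j).ne')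
    (fun j hj ↦ sub_ne_zero_of_prod_pow_ne_zero (hf w₂ ▸ hw₂') hj (hm j).ne') S₁ S₂
  refine ⟨?_, ?_, ?_⟩
  · simp only [v₁, v₂, ← map_mul, ← map_sum, div_mul_div_comm,
      Complex.ofReal_sqrt_mul_self_natCast, T, map_zero]
  · rw [← map_eq_zero (starRingEnd ℂ)]
    simp only [v₁, v₃, map_sum, map_mul, Complex.conj_conj, Complex.conj_ofReal,
      div_mul_eq_mul_div, Complex.ofReal_sqrt_mul_self_natCast, S₁]
  · simp only [v₂, v₃, Complex.conj_conj, div_mul_eq_mul_div,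
      Complex.ofReal_sqrt_mul_self_natCast, S₂]

/-- For `F(z) = ∏_{j=1}^{3} (z - z j)^(m j)` with distinct zeros and extra
critical points `w₁ ≠ w₂`, the vectors `v₁ = (√m_j/(w₁-z_j))_j`,
`v₂ = (conj(√m_j/(w₂-z_j)))_j`, `v₃ = (√m_j)_j` are mutually orthogonal
in `ℂ³` for the standard Hermitian inner product. -/
theorem stmt_11 (z : Fin 3 → ℂ) (hz : Function.Injective z)
    (m : Fin 3 → ℕ) (hm : ∀ j, 0 < m j)
    (f : ℂ → ℂ) (hf : ∀ x, f x = ∏ j, (x - z j) ^ (m j))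
    (w₁ w₂ : ℂ) (hw : w₁ ≠ w₂)
    (hw₁ : deriv f w₁ = 0) (hw₁' : f w₁ ≠ 0)
    (hw₂ : deriv f w₂ = 0) (hw₂' : f w₂ ≠ 0) :
    let v₁ : Fin 3 → ℂ := fun j => (Real.sqrt (m j) : ℂ) / (w₁ - z j)
    let v₂ : Fin 3 → ℂ := fun j =>
      starRingEnd ℂ ((Real.sqrt (m j) : ℂ) / (w₂ - z j))
    let v₃ : Fin 3 → ℂ := fun j => (Real.sqrt (m j) : ℂ)
    (∑ j, starRingEnd ℂ (v₁ j) * v₂ j = 0) ∧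
    (∑ j, starRingEnd ℂ (v₁ j) * v₃ j = 0) ∧
    (∑ j, starRingEnd ℂ (v₂ j) * v₃ j = 0) :=
  stmt_11_general z m hm f hf w₁ w₂ hw hw₁ hw₁' hw₂ hw₂'
end

section
/- Let F(z) = ∏_{k=1}^n (z−z_k) be a polynomial of degree n ≥ 2 and let w be a zero of F' that is not a zero of F. Then for every c ∈ ℂ, 1 ≤ ((1/n)Σ_k |z_k−c|) · max_k (1/|w−z_k|). In particular, for each critical point w of F there is a zero z_k of F with |w−z_k| ≤ σ_1(F), i.e., h(F',F) ≤ σ_1(F). -/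
/-!
At a critical point `w` of `F = ∏ (z - z_k)` which is not a zero, the logarithmic derivative
`F'/F = ∑ 1/(w - z_k)` vanishes, so for every centre `c`
`∑ (c - z_k)/(w - z_k) = ∑ ((c - w)/(w - z_k) + 1) = n`.
The triangle inequality bounds the left side by `(∑ |z_k - c|) · max_k 1/|w - z_k|`, and the
maximum is attained at the zero closest to `w`.
-/

open Finset

theorem sum_inv_sub_eq_zero_of_deriv_prod_eq_zero {𝕜 ι : Type*} [NontriviallyNormedField 𝕜]
    [Fintype ι] {z : ι → 𝕜} {w : 𝕜}
    (hw : deriv (fun x ↦ ∏ k, (x - z k)) w = 0) (hwz : ∀ k, w - z k ≠ 0) :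
    ∑ k, (w - z k)⁻¹ = 0 := by
  have hlog : logDeriv (fun x ↦ ∏ k, (x - z k)) w = ∑ k, logDeriv (· - z k) w :=
    logDeriv_prod (fun k _ ↦ hwz k) (fun k _ ↦ differentiableAt_id.sub_const (z k))
  simpa [logDeriv_apply, hw] using hlog.symm

theorem sum_sub_mul_inv_eq_card {K ι : Type*} [Field K] [Fintype ι] {z : ι → K} {w : K}
    (hwz : ∀ k, w - z k ≠ 0) (hsum : ∑ k, (w - z k)⁻¹ = 0) (c : K) :
    ∑ k, (c - z k) * (w - z k)⁻¹ = Fintype.card ι := by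
  have hterm : ∀ k, (c - z k) * (w - z k)⁻¹ = (c - w) * (w - z k)⁻¹ + 1 := fun k ↦ by
    rw [show c - z k = (c - w) + (w - z k) by ring, add_mul, mul_inv_cancel₀ (hwz k)]
  simp [hterm, sum_add_distrib, ← mul_sum, hsum]

theorem norm_sum_mul_inv_le {K ι : Type*} [NormedField K] [Fintype ι] (z : ι → K) (w c : K) :
    ‖∑ k, (c - z k) * (w - z k)⁻¹‖ ≤ (∑ k, ‖z k - c‖) * ⨆ k, ‖w - z k‖⁻¹ := by
  have hbdd : BddAbove (Set.range fun k ↦ ‖w - z k‖⁻¹) := (Set.finite_range _).bddAbove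
  calc ‖∑ k, (c - z k) * (w - z k)⁻¹‖ ≤ ∑ k, ‖(c - z k) * (w - z k)⁻¹‖ := norm_sum_le _ _
    _ ≤ ∑ k, ‖z k - c‖ * ⨆ k, ‖w - z k‖⁻¹ := by
      gcongr with k
      rw [norm_mul, norm_inv, norm_sub_rev c]
      exact mul_le_mul_of_nonneg_left (le_ciSup hbdd k) (norm_nonneg _)
    _ = (∑ k, ‖z k - c‖) * ⨆ k, ‖w - z k‖⁻¹ := (sum_mul ..).symm

/-- For a critical point `w` of `F` that is not a zero of `F`:
`1 ≤ ((1/n) ∑ |z k - c|) · max_k |w - z k|⁻¹` for every `c`, and hence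
there is a zero `z k` with `|w - z k| ≤ σ₁(F)`; i.e. `h(F',F) ≤ σ₁(F)`. -/
theorem stmt_13 (n : ℕ) (hn : 2 ≤ n) (z : Fin n → ℂ)
    (f : ℂ → ℂ) (hf : ∀ x, f x = ∏ k, (x - z k))
    (w : ℂ) (hw : deriv f w = 0) (hwz : f w ≠ 0) :
    (∀ c : ℂ, 1 ≤ ((1 / (n : ℝ)) * ∑ k, ‖z k - c‖) * ⨆ k, ‖w - z k‖⁻¹) ∧
    ∃ k, ‖w - z k‖ ≤ ⨅ c : ℂ, (1 / (n : ℝ)) * ∑ k, ‖z k - c‖ := by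
  obtain rfl : f = fun x ↦ ∏ k, (x - z k) := funext hf
  have hne : ∀ k, w - z k ≠ 0 := fun k ↦ (prod_ne_zero_iff.mp hwz) k (mem_univ k)
  have hsum := sum_inv_sub_eq_zero_of_deriv_prod_eq_zero hw hne
  have hn₀ : (0 : ℝ) < n := Nat.cast_pos.mpr (by omega)
  have hmean : ∀ c : ℂ, 1 ≤ ((1 / (n : ℝ)) * ∑ k, ‖z k - c‖) * ⨆ k, ‖w - z k‖⁻¹ := fun c ↦ by
    have hbound := norm_sum_mul_inv_le z w c
    rw [sum_sub_mul_inv_eq_card hne hsum c, Fintype.card_fin, Complex.norm_natCast] at hbound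
    rwa [mul_assoc, one_div, inv_mul_eq_div, le_div_iff₀ hn₀, one_mul]
  have : Nonempty (Fin n) := ⟨⟨0, by omega⟩⟩
  obtain ⟨k, hk⟩ := exists_eq_ciSup_of_finite (f := fun k ↦ ‖w - z k‖⁻¹)
  refine ⟨hmean, k, le_ciInf fun c ↦ ?_⟩
  have hc := hmean c
  rwa [← hk, ← div_eq_mul_inv, le_div_iff₀ (norm_pos_iff.mpr (hne k)), one_mul] at hc
end

section
/- Let B be a linear operator on ℂ² all of whose eigenvalues w satisfy |w| ≥ 1. Then for every vector x ∈ ℂ², ‖Bx‖² + ‖B*x‖² ≥ ‖x‖². -/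
/-!
Take a unit eigenvector `v` of `T` (eigenvalue `μ`) and complete it to an orthonormal basis
`v, w`. Since `span {v}` is `T`-invariant, `w` spans the `T†`-invariant line `{v}ᗮ`, so
`T† w = ν w`, and `conj ν` is the other eigenvalue of `T`. Then
`‖T† x‖ ≥ |⟪v, T† x⟫| = |μ| |⟪v, x⟫| ≥ |⟪v, x⟫|` and likewise `‖T x‖ ≥ |⟪w, x⟫|`;
Parseval in the basis `v, w` finishes the proof.
-/

open Module LinearMap InnerProductSpace

section
variable {𝕜 E : Type*} [RCLike 𝕜] [NormedAddCommGroup E] [InnerProductSpace 𝕜 E]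
  [FiniteDimensional 𝕜 E]

lemma Module.End.HasEigenvalue.star_of_adjoint {T : End 𝕜 E} {μ : 𝕜}
    (h : End.HasEigenvalue (adjoint T) μ) : T.HasEigenvalue (star μ) := by
  rw [End.hasEigenvalue_iff_mem_spectrum] at h ⊢
  rwa [← star_eq_adjoint, spectrum.map_star, Set.mem_star] at h

lemma norm_mul_norm_inner_le_norm_adjoint_apply (T : End 𝕜 E) {v : E} {μ : 𝕜}
    (hv : ‖v‖ = 1) (hTv : T v = μ • v) (x : E) :
    ‖μ‖ * ‖inner 𝕜 v x‖ ≤ ‖adjoint T x‖ :=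
  calc ‖μ‖ * ‖inner 𝕜 v x‖ = ‖inner 𝕜 v (adjoint T x)‖ := by
        rw [adjoint_inner_right, hTv, inner_smul_left, norm_mul, RCLike.norm_conj]
    _ ≤ ‖adjoint T x‖ := by simpa [hv] using norm_inner_le_norm (𝕜 := 𝕜) v (adjoint T x)

end

variable {E : Type*} [NormedAddCommGroup E] [InnerProductSpace ℂ E] [FiniteDimensional ℂ E]

lemma exists_orthonormalBasis_eigenvector_adjoint_eigenvector (hE : finrank ℂ E = 2)
    (T : End ℂ E) :
    ∃ (b : OrthonormalBasis (Fin 2) ℂ E) (μ ν : ℂ),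
      T (b 0) = μ • b 0 ∧ adjoint T (b 1) = ν • b 1 := by
  have : Nontrivial E := Module.nontrivial_of_finrank_eq_succ hE
  obtain ⟨μ, hμ⟩ := T.exists_eigenvalue
  obtain ⟨u, hu⟩ := hμ.exists_hasEigenvector
  set v := (‖u‖⁻¹ : ℂ) • u
  have hv : ‖v‖ = 1 := norm_smul_inv_norm hu.2
  have hTv : T v = μ • v := by rw [map_smul, hu.apply_eq_smul, smul_comm]
  have hv' : Orthonormal ℂ (({0} : Set (Fin 2)).domRestrict fun _ => v) :=
    ⟨fun _ => hv, fun i j hij => absurd (Subsingleton.elim i j) hij⟩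
  obtain ⟨b, hb⟩ := hv'.exists_orthonormalBasis_extension_of_card_eq (by simpa using hE)
  have hb0 : b 0 = v := hb 0 rfl
  refine ⟨b, μ, inner ℂ (b 1) (adjoint T (b 1)), by rw [hb0, hTv], ?_⟩
  have h0 : inner ℂ (b 0) (adjoint T (b 1)) = 0 := by
    rw [adjoint_inner_right, hb0, hTv, inner_smul_left, ← hb0, b.orthonormal.2 (by decide),
      mul_zero]
  simpa [Fin.sum_univ_two, h0] using (b.sum_repr' (adjoint T (b 1))).symm

theorem norm_sq_le_norm_apply_sq_add_norm_adjoint_apply_sq (hE : finrank ℂ E = 2) (T : End ℂ E)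
    (hT : ∀ μ, T.HasEigenvalue μ → 1 ≤ ‖μ‖) (x : E) :
    ‖x‖ ^ 2 ≤ ‖T x‖ ^ 2 + ‖adjoint T x‖ ^ 2 := by
  obtain ⟨b, μ, ν, hμ, hν⟩ := exists_orthonormalBasis_eigenvector_adjoint_eigenvector hE T
  have hμ1 : 1 ≤ ‖μ‖ := hT μ (End.hasEigenvalue_of_hasEigenvector
    ⟨End.mem_eigenspace_iff.2 hμ, b.orthonormal.ne_zero 0⟩)
  have hν1 : 1 ≤ ‖ν‖ := by
    simpa using hT _ (End.hasEigenvalue_of_hasEigenvector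
      ⟨End.mem_eigenspace_iff.2 hν, b.orthonormal.ne_zero 1⟩).star_of_adjoint
  have h0 := norm_mul_norm_inner_le_norm_adjoint_apply T (b.orthonormal.1 0) hμ x
  have h1 := norm_mul_norm_inner_le_norm_adjoint_apply (adjoint T) (b.orthonormal.1 1) hν x
  rw [adjoint_adjoint] at h1
  calc ‖x‖ ^ 2 = ‖inner ℂ (b 0) x‖ ^ 2 + ‖inner ℂ (b 1) x‖ ^ 2 := by
        rw [← b.sum_sq_norm_inner_right, Fin.sum_univ_two]
    _ ≤ (‖μ‖ * ‖inner ℂ (b 0) x‖) ^ 2 + (‖ν‖ * ‖inner ℂ (b 1) x‖) ^ 2 := by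
        gcongr <;> exact le_mul_of_one_le_left (norm_nonneg _) ‹_›
    _ ≤ ‖T x‖ ^ 2 + ‖adjoint T x‖ ^ 2 := by
        rw [add_comm]; gcongr

/-- If all eigenvalues `w` of an operator `B` on `ℂ²` satisfy `|w| ≥ 1`,
then `‖Bx‖² + ‖B*x‖² ≥ ‖x‖²` for all `x`. -/
theorem stmt_15 (B : Matrix (Fin 2) (Fin 2) ℂ)
    (hB : ∀ μ : ℂ, (Matrix.charpoly B).IsRoot μ → 1 ≤ ‖μ‖) :
    ∀ x : Fin 2 → ℂ,
      ∑ i, ‖x i‖ ^ 2 ≤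
        (∑ i, ‖B.mulVec x i‖ ^ 2) + ∑ i, ‖B.conjTranspose.mulVec x i‖ ^ 2 := by
  intro x
  have hT : ∀ μ, End.HasEigenvalue (Matrix.toEuclideanLin B) μ → 1 ≤ ‖μ‖ := by
    intro μ hμ
    rw [End.hasEigenvalue_iff_isRoot_charpoly, Matrix.toEuclideanLin_eq_toLin_orthonormal,
      Matrix.charpoly_toLin] at hμ
    exact hB μ hμ
  have := norm_sq_le_norm_apply_sq_add_norm_adjoint_apply_sq (by simp) _ hT (WithLp.toLp 2 x)
  rw [← Matrix.toEuclideanLin_conjTranspose_eq_adjoint] at this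
  simpa [EuclideanSpace.norm_sq_eq] using this
end

section
/- The inequality ‖Bx‖² + ‖B*x‖² ≥ C‖x‖² fails in dimension 3 for every constant C > 0: for the 3×3 matrix B with rows (1,−a,a²),(0,1,−a),(0,0,1) and x = (1,a,1)ᵀ with a real, the ratio (‖Bx‖²+‖B*x‖²)/‖x‖² tends to 0 as a → ∞, even though all eigenvalues of B equal 1 (hence have modulus ≥ 1). -/
open Finset Filter

open Polynomial in
/-- The two-dimensional inequality `‖Bx‖² + ‖B*x‖² ≥ C‖x‖²` fails in
dimension 3: for `B = [[1,−a,a²],[0,1,−a],[0,0,1]]` (all eigenvalues `1`)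
and `x = (1,a,1)`, the ratio `(‖Bx‖²+‖B*x‖²)/‖x‖²` tends to `0` as the real
parameter `a → ∞`. -/
theorem stmt_16 :
    let B : ℝ → Matrix (Fin 3) (Fin 3) ℂ := fun a =>
      !![1, -(a : ℂ), (a : ℂ) ^ 2; 0, 1, -(a : ℂ); 0, 0, 1]
    let x : ℝ → Fin 3 → ℂ := fun a => ![1, (a : ℂ), 1]
    (∀ a : ℝ, ∀ μ : ℂ, (Matrix.charpoly (B a)).IsRoot μ → μ = 1) ∧
    Tendsto (fun a : ℝ =>
        ((∑ i, ‖(B a).mulVec (x a) i‖ ^ 2) +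
          ∑ i, ‖(B a).conjTranspose.mulVec (x a) i‖ ^ 2) /
        (∑ i, ‖x a i‖ ^ 2))
      atTop (nhds 0) := by
  intro B x
  constructor
  · intro a μ h
    have hc : (B a).charpoly = (X - 1) ^ 3 := by
      rw [Matrix.charpoly, Matrix.det_fin_three]
      simp [Matrix.charmatrix_apply, B, Matrix.one_apply, Matrix.vecHead, Matrix.vecTail]
      ring
    rw [hc] at h
    have h' : μ - 1 = 0 := by simpa using h
    linear_combination h'
  · have heq : (fun a : ℝ =>
        ((∑ i, ‖(B a).mulVec (x a) i‖ ^ 2) +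
          ∑ i, ‖(B a).conjTranspose.mulVec (x a) i‖ ^ 2) /
        (∑ i, ‖x a i‖ ^ 2)) = fun a : ℝ => 4 / (a ^ 2 + 2) := by
      funext a
      have h1 : (B a).mulVec (x a) = ![1, 0, 1] := by
        funext i
        fin_cases i <;>
          simp [B, x, Matrix.mulVec, dotProduct, Fin.sum_univ_three,
            Matrix.vecHead, Matrix.vecTail] <;> ring
      have h2 : (B a).conjTranspose.mulVec (x a) = ![1, 0, 1] := by
        funext i
        fin_cases i <;>
          simp [B, x, Matrix.mulVec, dotProduct, Fin.sum_univ_three,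
            Matrix.conjTranspose_apply, Matrix.vecHead, Matrix.vecTail] <;> ring
      rw [h1, h2]
      simp [x, Fin.sum_univ_three, Complex.norm_real]
      ring
    rw [heq]
    exact Tendsto.div_atTop tendsto_const_nhds
      (tendsto_atTop_add_const_right _ 2 (tendsto_pow_atTop two_ne_zero))
end

section
/- Alexander–Walsh theorem: Let z_1 be a zero of multiplicity m_1 of a polynomial F of degree n, and let d be the minimum distance from z_1 to any other zero of F. Then F'(z) ≠ 0 for all z with 0 < |z − z_1| < m_1·d/n. -/
open Polynomial Multiset

/-- Alexander–Walsh theorem: if `z₁` is a zero of multiplicity `m₁` of a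
polynomial `F` of degree `n` and `d` is the minimum distance from `z₁` to
another zero, then `F'` has no zero `z` with `0 < |z - z₁| < m₁ d / n`. -/
theorem stmt_18 (F : Polynomial ℂ) (n : ℕ) (hdeg : F.natDegree = n) (hn : 2 ≤ n)
    (z₁ : ℂ) (hz₁ : F.IsRoot z₁) (m₁ : ℕ) (hm₁ : m₁ = F.rootMultiplicity z₁)
    (hother : ∃ z : ℂ, F.IsRoot z ∧ z ≠ z₁)
    (d : ℝ) (hd : d = sInf {r : ℝ | ∃ z : ℂ, F.IsRoot z ∧ z ≠ z₁ ∧ r = ‖z₁ - z‖}) :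
    ∀ z : ℂ, 0 < ‖z - z₁‖ → ‖z - z₁‖ < (m₁ : ℝ) * d / n →
      (Polynomial.derivative F).eval z ≠ 0 := by
  classical
  intro z hz0 hzlt hder
  have hF0 : F ≠ 0 := by
    intro h; rw [h] at hdeg; simp at hdeg; omega
  set Sset := {r : ℝ | ∃ w : ℂ, F.IsRoot w ∧ w ≠ z₁ ∧ r = ‖z₁ - w‖} with hSset
  have hSsub : Sset ⊆ (fun w => ‖z₁ - w‖) '' (F.roots.toFinset : Set ℂ) := by
    rintro x ⟨w, hw, hwne, rfl⟩
    refine ⟨w, ?_, rfl⟩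
    simp only [Finset.coe_sort_coe, Multiset.mem_toFinset, Finset.mem_coe]
    exact (Polynomial.mem_roots hF0).mpr hw
  have hfin : Sset.Finite :=
    Set.Finite.subset ((F.roots.toFinset.finite_toSet).image _) hSsub
  have hne : Sset.Nonempty := by
    obtain ⟨w, hw, hwne⟩ := hother
    exact ⟨‖z₁ - w‖, w, hw, hwne, rfl⟩
  have hdmem : d ∈ Sset := hd ▸ hne.csInf_mem hfin
  have hdpos : 0 < d := by
    obtain ⟨w, hw, hwne, hweq⟩ := hdmem
    rw [hweq]
    simpa [sub_eq_zero] using fun h => hwne h.symm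
  have hdle : ∀ w : ℂ, F.IsRoot w → w ≠ z₁ → d ≤ ‖z₁ - w‖ := by
    intro w hw hwne
    rw [hd]
    exact csInf_le hfin.bddBelow ⟨w, hw, hwne, rfl⟩
  set r := ‖z - z₁‖ with hr
  have hm₁pos : 0 < m₁ := by
    rw [hm₁]; exact (Polynomial.rootMultiplicity_pos hF0).mpr hz₁
  have hcard : Multiset.card F.roots = n := by
    rw [← hdeg]
    exact Polynomial.splits_iff_card_roots.mp (IsAlgClosed.splits F)
  have hm₁le : m₁ ≤ n := by
    rw [hm₁, ← Polynomial.count_roots, ← hcard]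
    exact Multiset.count_le_card _ _
  have hnpos : (0:ℝ) < n := by positivity
  have hrd : r < d := by
    have : (m₁ : ℝ) * d / n ≤ d := by
      rw [div_le_iff₀ hnpos]
      nlinarith [hdpos.le, (Nat.cast_le (α := ℝ)).mpr hm₁le]
    linarith
  have hzsub : ∀ s ∈ F.roots, z - s ≠ 0 := by
    intro s hs h0
    have hs' : F.IsRoot s := (Polynomial.mem_roots hF0).mp hs
    have hzs : z = s := by rwa [sub_eq_zero] at h0
    rcases eq_or_ne s z₁ with h | h
    · apply absurd hz0
      rw [hr, hzs, h]; simp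
    · have h1 := hdle s hs' h
      have h2 : ‖z₁ - s‖ = r := by rw [hr, hzs, norm_sub_rev]
      linarith [h2 ▸ h1]
  set a := F.leadingCoeff with ha
  have ha0 : a ≠ 0 := Polynomial.leadingCoeff_ne_zero.mpr hF0
  have hfact : F = C a * (F.roots.map fun w => X - C w).prod :=
    (Polynomial.C_leadingCoeff_mul_prod_multiset_X_sub_C (by rw [hcard, hdeg])).symm
  have hQ0 : (F.roots.map fun s => z - s).prod ≠ 0 :=
    Multiset.prod_ne_zero (by
      intro h0
      obtain ⟨s, hs, hs0⟩ := Multiset.mem_map.mp h0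
      exact hzsub s hs hs0)
  have hsum : (F.roots.map fun s => (z - s)⁻¹).sum = 0 := by
    have hD : Polynomial.eval z (Polynomial.derivative
        ((F.roots.map fun w => X - C w).prod)) = 0 := by
      have h := hder
      rw [hfact] at h
      simp only [Polynomial.derivative_mul, Polynomial.derivative_C, zero_mul,
        zero_add, Polynomial.eval_mul, Polynomial.eval_C] at h
      exact (mul_eq_zero.mp h).resolve_left ha0
    rw [Polynomial.derivative_prod] at hD
    have heval : (F.roots.map fun i =>
        ((F.roots.erase i).map fun s => z - s).prod).sum = 0 := by
      rw [← hD, ← Polynomial.coe_evalRingHom, map_multiset_sum, Multiset.map_map]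
      simp only [Polynomial.coe_evalRingHom]
      apply congrArg Multiset.sum
      apply Multiset.map_congr rfl
      intro i hi
      simp [Polynomial.eval_multiset_prod, Multiset.map_map, Function.comp_def]
    have hterm : ∀ i ∈ F.roots,
        ((F.roots.erase i).map fun s => z - s).prod
          = (F.roots.map fun s => z - s).prod * (z - i)⁻¹ := by
      intro i hi
      have hQ : (F.roots.map fun s => z - s).prod
          = (z - i) * ((F.roots.erase i).map fun s => z - s).prod := by
        conv_lhs => rw [← Multiset.cons_erase hi]
        rw [Multiset.map_cons, Multiset.prod_cons]
      rw [hQ, mul_comm (z - i), mul_assoc, mul_inv_cancel₀ (hzsub i hi), mul_one]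
    have hmul : ((F.roots.map fun s => z - s).prod) *
        (F.roots.map fun s => (z - s)⁻¹).sum = 0 := by
      rw [← heval, ← Multiset.sum_map_mul_left]
      apply congrArg Multiset.sum
      symm
      exact Multiset.map_congr rfl hterm
    exact (mul_eq_zero.mp hmul).resolve_left hQ0
  set T := F.roots.filter (fun s => ¬ s = z₁) with hT
  have hsplit : F.roots = Multiset.replicate m₁ z₁ + T := by
    have h := Multiset.filter_add_not (fun s => s = z₁) F.roots
    rw [Multiset.filter_eq'] at h
    rw [hm₁, ← Polynomial.count_roots]
    exact h.symm
  have hTcard : Multiset.card T = n - m₁ := by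
    have h := congrArg Multiset.card hsplit
    simp only [Multiset.card_add, Multiset.card_replicate, hcard] at h
    omega
  have hkey : (m₁ : ℂ) * (z - z₁)⁻¹ = - (T.map fun s => (z - s)⁻¹).sum := by
    rw [hsplit] at hsum
    rw [Multiset.map_add, Multiset.sum_add, Multiset.map_replicate,
      Multiset.sum_replicate, nsmul_eq_mul] at hsum
    linear_combination hsum
  have hTbound : ∀ s ∈ T, ‖(z - s)⁻¹‖ ≤ (d - r)⁻¹ := by
    intro s hs
    rw [hT, Multiset.mem_filter] at hs
    obtain ⟨hs1, hs2⟩ := hs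
    have hsroot : F.IsRoot s := (Polynomial.mem_roots hF0).mp hs1
    have h1 : d ≤ ‖z₁ - s‖ := hdle s hsroot hs2
    have h2 : d - r ≤ ‖z - s‖ := by
      have h3 := norm_sub_norm_le (z₁ - s) (z₁ - z)
      have h4 : (z₁ - s) - (z₁ - z) = z - s := by ring
      have h5 : ‖z₁ - z‖ = r := by rw [hr, norm_sub_rev]
      rw [h4, h5] at h3
      linarith
    rw [norm_inv]
    exact inv_anti₀ (by linarith) h2
  -- norm estimate
  have hnorm : (m₁ : ℝ) * r⁻¹ ≤ ((n : ℝ) - m₁) * (d - r)⁻¹ := by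
    have h1 : ‖(m₁:ℂ) * (z - z₁)⁻¹‖ = (m₁:ℝ) * r⁻¹ := by
      rw [norm_mul, norm_inv, hr]
      simp
    have h2 := norm_multiset_sum_le (T.map fun s => (z - s)⁻¹)
    have h3 : ((T.map fun s => (z - s)⁻¹).map norm).sum ≤
        (Multiset.card T) • (d - r)⁻¹ := by
      have hb := Multiset.sum_le_card_nsmul ((T.map fun s => (z - s)⁻¹).map norm)
        ((d - r)⁻¹) ?_
      · simpa [Multiset.card_map] using hb
      · intro x hx
        obtain ⟨y, hy, rfl⟩ := Multiset.mem_map.mp hx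
        obtain ⟨s, hs, rfl⟩ := Multiset.mem_map.mp hy
        exact hTbound s hs
    have h4 : ‖(m₁:ℂ) * (z - z₁)⁻¹‖ ≤ (Multiset.card T) • (d - r)⁻¹ := by
      rw [hkey, norm_neg]
      exact le_trans h2 h3
    rw [h1, hTcard, nsmul_eq_mul, Nat.cast_sub hm₁le] at h4
    exact h4
  have e1 : (m₁:ℝ) / r ≤ ((n:ℝ) - m₁) / (d - r) := by
    rw [div_eq_mul_inv, div_eq_mul_inv]; exact hnorm
  rw [div_le_div_iff₀ hz0 (by linarith)] at e1
  have e2 : (m₁:ℝ) * d / n ≤ r := by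
    rw [div_le_iff₀ hnpos]; nlinarith
  linarith
end

section
/- Counterexample to the Chebyshev-radius claim for Cauchy transforms: for n ≥ 3 let μ = (1/(2n+1))δ_1 + (n/(2n+1))δ_i + (n/(2n+1))δ_{−i}. Then all zeros of the Cauchy transform C_μ(z) = Σ α_k/(z−z_k) and the barycenter E(μ) are real, namely W_e(μ) = {(n ± √(n²−2n−1))/(2n+1)} ∪ {1/(2n+1)}, and the distance from the support point i to W_e(μ) is strictly greater than 1 = σ_∞(μ). -/
/-- Counterexample to the Chebyshev-radius claim for Cauchy transforms: for
`n ≥ 3` and `μ = (1/(2n+1))δ₁ + (n/(2n+1))δ_i + (n/(2n+1))δ_{-i}`, the set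
`W_e(μ)` (zeros of the Cauchy transform outside the support, together with
the barycenter `E(μ) = 1/(2n+1)`) consists of the three real numbers
`(n ± √(n²-2n-1))/(2n+1)` and `1/(2n+1)`, and every point of `W_e(μ)` has
distance `> 1 = σ_∞(μ)` from the support point `i`. -/
theorem stmt_19 (n : ℕ) (hn : 3 ≤ n) :
    let C : ℂ → ℂ := fun z =>
      (1 / (2 * (n : ℂ) + 1)) / (z - 1) +
        ((n : ℂ) / (2 * (n : ℂ) + 1)) / (z - Complex.I) +
        ((n : ℂ) / (2 * (n : ℂ) + 1)) / (z + Complex.I)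
    let E : ℂ := 1 / (2 * (n : ℂ) + 1)
    let W : Set ℂ :=
      {z : ℂ | C z = 0 ∧ z ∉ ({1, Complex.I, -Complex.I} : Set ℂ)} ∪ {E}
    (W = {((((n : ℝ) + Real.sqrt ((n : ℝ) ^ 2 - 2 * n - 1)) / (2 * n + 1) : ℝ) : ℂ),
          ((((n : ℝ) - Real.sqrt ((n : ℝ) ^ 2 - 2 * n - 1)) / (2 * n + 1) : ℝ) : ℂ),
          (((1 / (2 * (n : ℝ) + 1)) : ℝ) : ℂ)}) ∧
    ∀ w ∈ W, 1 < dist Complex.I w := by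
  intro C E W
  have h3 : (3:ℝ) ≤ n := by exact_mod_cast hn
  set s : ℝ := Real.sqrt ((n:ℝ)^2 - 2*n - 1) with hs_def
  have hs0 : (0:ℝ) ≤ s := Real.sqrt_nonneg _
  have hs2 : s^2 = (n:ℝ)^2 - 2*n - 1 := Real.sq_sqrt (by nlinarith)
  have hsn : s < n := by rw [hs_def, Real.sqrt_lt' (by linarith)]; nlinarith
  have hNR : (0:ℝ) < 2*n+1 := by linarith
  -- the three real points
  set a : ℝ := ((n:ℝ) + s) / (2*n+1) with ha_def
  set b : ℝ := ((n:ℝ) - s) / (2*n+1) with hb_def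
  set e : ℝ := 1 / (2*(n:ℝ)+1) with he_def
  have ha_pos : 0 < a := by apply div_pos <;> linarith
  have hb_pos : 0 < b := by apply div_pos <;> linarith
  have he_pos : 0 < e := by apply div_pos <;> linarith
  have ha1 : a < 1 := by rw [ha_def, div_lt_one hNR]; linarith
  have hb1 : b < 1 := by rw [hb_def, div_lt_one hNR]; linarith
  have hN : 2*(n:ℂ)+1 ≠ 0 := by
    have h : ((2*(n:ℝ)+1 : ℝ) : ℂ) ≠ 0 := Complex.ofReal_ne_zero.mpr (ne_of_gt hNR)
    push_cast at h
    exact h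
  have hsC : (s:ℂ)^2 = (n:ℂ)^2 - 2*n - 1 := by
    rw [show (s:ℂ)^2 = ((s^2 : ℝ):ℂ) by push_cast; ring, hs2]
    push_cast; ring
  -- coercion of the three points
  have haC : ((a:ℝ):ℂ) = ((n:ℂ) + s) / (2*n+1) := by push_cast [ha_def]; ring
  have hbC : ((b:ℝ):ℂ) = ((n:ℂ) - s) / (2*n+1) := by push_cast [hb_def]; ring
  have heC : ((e:ℝ):ℂ) = E := by push_cast [he_def, E]; ring
  -- factorization of the quadratic
  have hfact : ∀ z : ℂ, (2*(n:ℂ)+1)*z^2 - 2*n*z + 1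
      = (2*(n:ℂ)+1) * (z - ((a:ℝ):ℂ)) * (z - ((b:ℝ):ℂ)) := by
    intro z
    rw [haC, hbC]
    field_simp
    linear_combination hsC
  -- a real in (0,1) is not in the support
  have hnotsupp : ∀ x : ℝ, 0 < x → x < 1 → ((x:ℝ):ℂ) ∉ ({1, Complex.I, -Complex.I} : Set ℂ) := by
    intro x hx0 hx1 hmem
    rcases hmem with h | h | h
    · rw [show (1:ℂ) = ((1:ℝ):ℂ) by norm_num] at h
      exact absurd (Complex.ofReal_inj.mp h) (ne_of_lt hx1)
    · simpa using congrArg Complex.im h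
    · have := congrArg Complex.im h
      simp at this
  -- C z as a single fraction
  have hCfrac : ∀ z : ℂ, z - 1 ≠ 0 → z - Complex.I ≠ 0 → z + Complex.I ≠ 0 →
      C z = ((2*(n:ℂ)+1)*z^2 - 2*n*z + 1) / ((2*(n:ℂ)+1)*(z-1)*(z-Complex.I)*(z+Complex.I)) := by
    intro z h1 h2 hmi
    show (1 / (2 * (n : ℂ) + 1)) / (z - 1) +
        ((n : ℂ) / (2 * (n : ℂ) + 1)) / (z - Complex.I) +
        ((n : ℂ) / (2 * (n : ℂ) + 1)) / (z + Complex.I) = _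
    field_simp
    ring_nf
    simp [Complex.I_sq]
    ring_nf
  -- zeros of C away from support
  have hCzero : ∀ z : ℂ, z ∉ ({1, Complex.I, -Complex.I} : Set ℂ) →
      (C z = 0 ↔ (z = ((a:ℝ):ℂ) ∨ z = ((b:ℝ):ℂ))) := by
    intro z hz
    have h1 : z - 1 ≠ 0 := sub_ne_zero.mpr (fun h => hz (by simp [h]))
    have h2 : z - Complex.I ≠ 0 := sub_ne_zero.mpr (fun h => hz (by simp [h]))
    have hmi : z + Complex.I ≠ 0 := fun h => hz (by
      have : z = -Complex.I := by linear_combination h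
      simp [this])
    rw [hCfrac z h1 h2 hmi, div_eq_zero_iff]
    constructor
    · rintro (h | h)
      · rw [hfact z] at h
        rcases mul_eq_zero.mp h with h' | h'
        · rcases mul_eq_zero.mp h' with h'' | h''
          · exact absurd h'' hN
          · exact Or.inl (sub_eq_zero.mp h'')
        · exact Or.inr (sub_eq_zero.mp h')
      · exact absurd h (by simp [hN, h1, h2, hmi])
    · rintro (h | h) <;> left <;> rw [hfact z, h] <;> ring
  -- C at a and b is zero
  have haW : ((a:ℝ):ℂ) ∈ W := Or.inl ⟨(hCzero _ (hnotsupp a ha_pos ha1)).mpr (Or.inl rfl),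
    hnotsupp a ha_pos ha1⟩
  have hbW : ((b:ℝ):ℂ) ∈ W := Or.inl ⟨(hCzero _ (hnotsupp b hb_pos hb1)).mpr (Or.inr rfl),
    hnotsupp b hb_pos hb1⟩
  have hset : W = {((a:ℝ):ℂ), ((b:ℝ):ℂ), ((e:ℝ):ℂ)} := by
    ext z
    constructor
    · rintro (⟨hz0, hzs⟩ | hz)
      · rcases (hCzero z hzs).mp hz0 with h | h
        · exact Or.inl h
        · exact Or.inr (Or.inl h)
      · right; right
        rw [Set.mem_singleton_iff.mp hz, ← heC]
        rfl
    · rintro (h | h | h)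
      · rw [h]; exact haW
      · rw [h]; exact hbW
      · rw [h, heC]; exact Or.inr rfl
  have hdist : ∀ x : ℝ, 0 < x → 1 < dist Complex.I ((x:ℝ):ℂ) := by
    intro x hx
    rw [Complex.dist_eq, Complex.norm_def]
    rw [show (1:ℝ) = Real.sqrt 1 by simp]
    apply Real.sqrt_lt_sqrt (by norm_num)
    simp [Complex.normSq_apply]
    nlinarith
  constructor
  · exact hset
  · intro w hw
    rw [hset] at hw
    rcases hw with h | h | h
    · rw [h]; exact hdist a ha_pos
    · rw [h]; exact hdist b hb_pos
    · rw [h]; exact hdist e he_pos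
end
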